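/- Coalescing can be redundantly pushed into pointwise multiplication: for all temporal K-elements k and k', coal(k ·_P k') = coal(coal(k) ·_P k'). -/

import Mathlib

open scoped Classical

namespace TemporalK

variable {K : Type*}

/-- An interval over the time domain `{0, ..., N-1}`: a pair `(b, e)` with `b < e ≤ N`. -/
abbrev TInterval (N : ℕ) := {I : Fin (N + 1) × Fin (N + 1) // I.1 < I.2}

/-- A temporal `K`-element: a function assigning to each interval an element of `K`. -/
abbrev TempEl (N : ℕ) (K : Type*) := TInterval N → K

/-- The interval `I = (b, e)` contains the time point `T` iff `b ≤ T < e`. -/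
def Contains {N : ℕ} (I : TInterval N) (T : ℕ) : Prop :=
  (I.val.1 : ℕ) ≤ T ∧ T < (I.val.2 : ℕ)

/-- The timeslice of `𝒯` at time point `T`: the sum of `𝒯 I` over all intervals `I`
containing `T`. -/
noncomputable def slice {N : ℕ} [CommSemiring K] (𝒯 : TempEl N K) (T : ℕ) : K :=
  ∑ I ∈ Finset.univ.filter (fun I : TInterval N => Contains I T), 𝒯 I

/-- `T` is an (annotation) changepoint of `𝒯` iff `T = 0` or the timeslices at `T - 1`
and `T` differ. -/
def Changepoint {N : ℕ} [CommSemiring K] (𝒯 : TempEl N K) (T : ℕ) : Prop :=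
  T = 0 ∨ slice 𝒯 (T - 1) ≠ slice 𝒯 T

/-- `I = (b, e)` is a changepoint interval of `𝒯` iff `b` is a changepoint, `e` is a
changepoint or equals `N`, and no time point strictly between `b` and `e` is a changepoint. -/
def CPInterval {N : ℕ} [CommSemiring K] (𝒯 : TempEl N K) (I : TInterval N) : Prop :=
  Changepoint 𝒯 (I.val.1 : ℕ) ∧
    (Changepoint 𝒯 (I.val.2 : ℕ) ∨ (I.val.2 : ℕ) = N) ∧
    ∀ T : ℕ, (I.val.1 : ℕ) < T → T < (I.val.2 : ℕ) → ¬ Changepoint 𝒯 T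

/-- `K`-coalescing: maps changepoint intervals `(b, e)` to the timeslice at `b` and all
other intervals to `0`. -/
noncomputable def coal {N : ℕ} [CommSemiring K] (𝒯 : TempEl N K) : TempEl N K :=
  fun I => if CPInterval 𝒯 I then slice 𝒯 (I.val.1 : ℕ) else 0

/-- Snapshot equivalence: equal timeslices at every time point. -/
def SnapEq {N : ℕ} [CommSemiring K] (k k' : TempEl N K) : Prop :=
  ∀ T : ℕ, T < N → slice k T = slice k' T

/-- A temporal `K`-element is coalesced iff it is the `K`-coalescing of some
temporal `K`-element. -/
def Coalesced {N : ℕ} [CommSemiring K] (k : TempEl N K) : Prop :=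
  ∃ 𝒯 : TempEl N K, k = coal 𝒯

/-- Pointwise addition of temporal `K`-elements. -/
def padd {N : ℕ} [CommSemiring K] (k k' : TempEl N K) : TempEl N K :=
  fun I => k I + k' I

/-- Pointwise multiplication of temporal `K`-elements:
`(k ·_P k')(I) = Σ k(I')·k'(I'')` over all pairs `(I', I'')` whose intersection is
nonempty and equals `I`. -/
noncomputable def pmul {N : ℕ} [CommSemiring K] (k k' : TempEl N K) : TempEl N K :=
  fun I =>
    ∑ p ∈ Finset.univ.filter (fun p : TInterval N × TInterval N =>
        max (p.1.val.1 : ℕ) (p.2.val.1 : ℕ) < min (p.1.val.2 : ℕ) (p.2.val.2 : ℕ) ∧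
        (I.val.1 : ℕ) = max (p.1.val.1 : ℕ) (p.2.val.1 : ℕ) ∧
        (I.val.2 : ℕ) = min (p.1.val.2 : ℕ) (p.2.val.2 : ℕ)),
      k p.1 * k' p.2

/-- Addition of the period semiring: coalesced pointwise addition. -/
noncomputable def tadd {N : ℕ} [CommSemiring K] (k k' : TempEl N K) : TempEl N K :=
  coal (padd k k')

/-- Multiplication of the period semiring: coalesced pointwise multiplication. -/
noncomputable def tmul {N : ℕ} [CommSemiring K] (k k' : TempEl N K) : TempEl N K :=
  coal (pmul k k')

/-- The zero of the period semiring: maps every interval to `0`. -/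
def zeroT (N : ℕ) (K : Type*) [CommSemiring K] : TempEl N K := fun _ => 0

/-- The one of the period semiring: maps the interval `(0, N)` to `1` and every other
interval to `0`. -/
def oneT (N : ℕ) (K : Type*) [CommSemiring K] : TempEl N K :=
  fun I => if (I.val.1 : ℕ) = 0 ∧ (I.val.2 : ℕ) = N then 1 else 0

/-- Encoding of an annotation history `f : time points → K` as a coalesced temporal
`K`-element: coalesce the element assigning `f T` to each singleton interval `(T, T+1)`. -/
noncomputable def enc {N : ℕ} [CommSemiring K] (f : Fin N → K) : TempEl N K :=
  coal (fun I =>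
    if h : (I.val.2 : ℕ) = (I.val.1 : ℕ) + 1 then
      f ⟨(I.val.1 : ℕ), by have := I.val.2.isLt; omega⟩
    else 0)

/-- The natural preorder of the semiring `K`. -/
def nle [CommSemiring K] (a b : K) : Prop := ∃ c, a + c = b

/-- The natural preorder of the period semiring (on coalesced temporal `K`-elements). -/
def tle {N : ℕ} [CommSemiring K] (k k' : TempEl N K) : Prop :=
  ∃ k'' : TempEl N K, Coalesced k'' ∧ tadd k k'' = k'

/-- The pointwise monus: assigns `τ_T(k) −_K τ_T(k')` to each singleton interval
`(T, T+1)` and `0` to every non-singleton interval. -/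
noncomputable def pmonus {N : ℕ} [CommSemiring K] (monus : K → K → K)
    (k k' : TempEl N K) : TempEl N K :=
  fun I =>
    if (I.val.2 : ℕ) = (I.val.1 : ℕ) + 1 then
      monus (slice k (I.val.1 : ℕ)) (slice k' (I.val.1 : ℕ))
    else 0

/-- The monus of the period semiring: coalesced pointwise monus. -/
noncomputable def tmonus {N : ℕ} [CommSemiring K] (monus : K → K → K)
    (k k' : TempEl N K) : TempEl N K :=
  coal (pmonus monus k k')

end TemporalK

open TemporalK


/-!
Coalescing depends only on the timeslices, so it suffices that `pmul k k'` and
`pmul (coal k) k'` have the same timeslices. The timeslice is multiplicative for `pmul`, since an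
interval contains `T` iff it is the intersection of two intervals containing `T`; and coalescing
preserves timeslices, since each time point `T < N` lies in exactly one changepoint interval, on
which the timeslice is constant.
-/

namespace TemporalK

variable {N : ℕ} {K : Type*} [CommSemiring K]

theorem TInterval.ext {I J : TInterval N} (h₁ : (I.val.1 : ℕ) = J.val.1)
    (h₂ : (I.val.2 : ℕ) = J.val.2) : I = J :=
  Subtype.ext (Prod.ext (Fin.ext h₁) (Fin.ext h₂))

theorem exists_tInterval {b e : ℕ} (hbe : b < e) (he : e ≤ N) :
    ∃ I : TInterval N, (I.val.1 : ℕ) = b ∧ (I.val.2 : ℕ) = e :=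
  ⟨⟨(⟨b, by omega⟩, ⟨e, by omega⟩), Fin.mk_lt_mk.mpr hbe⟩, rfl, rfl⟩

theorem slice_eq_zero_of_le (𝒯 : TempEl N K) {T : ℕ} (hT : N ≤ T) : slice 𝒯 T = 0 :=
  Finset.sum_eq_zero fun I hI => by
    have := (Finset.mem_filter.mp hI).2.2
    have := I.val.2.isLt
    omega

theorem slice_pmul (k k' : TempEl N K) (T : ℕ) :
    slice (pmul k k') T = slice k T * slice k' T := by
  set A := Finset.univ.filter fun I : TInterval N => Contains I T
  set B := fun I : TInterval N => Finset.univ.filter fun p : TInterval N × TInterval N =>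
    max (p.1.val.1 : ℕ) (p.2.val.1 : ℕ) < min (p.1.val.2 : ℕ) (p.2.val.2 : ℕ) ∧
    (I.val.1 : ℕ) = max (p.1.val.1 : ℕ) (p.2.val.1 : ℕ) ∧
    (I.val.2 : ℕ) = min (p.1.val.2 : ℕ) (p.2.val.2 : ℕ)
  have hdisj : (A : Set (TInterval N)).PairwiseDisjoint B := by
    intro I _ J _ hIJ
    refine Finset.disjoint_left.mpr fun p hI hJ => hIJ ?_
    simp only [B, Finset.mem_filter, Finset.mem_univ, true_and] at hI hJ
    exact TInterval.ext (hI.2.1.trans hJ.2.1.symm) (hI.2.2.trans hJ.2.2.symm)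
  have hunion : A.biUnion B = A ×ˢ A := by
    ext ⟨I', I''⟩
    simp only [Finset.mem_biUnion, Finset.mem_product]
    simp only [A, B, Finset.mem_filter, Finset.mem_univ, true_and]
    unfold Contains
    constructor
    · rintro ⟨I, hIT, -, hb, he⟩
      omega
    · rintro ⟨hI'T, hI''T⟩
      obtain ⟨I, hb, he⟩ := exists_tInterval (N := N)
        (b := max (I'.val.1 : ℕ) I''.val.1) (e := min (I'.val.2 : ℕ) I''.val.2)
        (by omega) (by have := I'.val.2.isLt; omega)
      exact ⟨I, by omega, by omega, hb, he⟩
  calc slice (pmul k k') T = ∑ p ∈ A.biUnion B, k p.1 * k' p.2 :=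
        (Finset.sum_biUnion hdisj).symm
    _ = slice k T * slice k' T := by
      rw [hunion, Finset.sum_product, slice, slice, Finset.sum_mul_sum]

namespace CPInterval

variable {𝒯 : TempEl N K} {I J : TInterval N}

theorem slice_eq (hI : CPInterval 𝒯 I) {T : ℕ} (hT : Contains I T) :
    slice 𝒯 T = slice 𝒯 I.val.1 := by
  obtain ⟨hbT, hTe⟩ := hT
  induction T, hbT using Nat.le_induction with
  | base => rfl
  | succ T hbT ih =>
    have hcp := hI.2.2 (T + 1) (by omega) hTe
    simp only [Changepoint, Nat.add_sub_cancel, not_or, not_not] at hcp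
    rw [← hcp.2, ih (by omega)]

theorem eq_of_contains (hI : CPInterval 𝒯 I) (hJ : CPInterval 𝒯 J) {T : ℕ}
    (hIT : Contains I T) (hJT : Contains J T) : I = J := by
  have hle : ∀ {I J : TInterval N}, CPInterval 𝒯 I → CPInterval 𝒯 J → Contains I T →
      Contains J T → (I.val.1 : ℕ) ≤ J.val.1 ∧ (I.val.2 : ℕ) ≤ J.val.2 := by
    intro I J hI hJ hIT hJT
    constructor
    · by_contra! h
      exact hJ.2.2 _ h (by have := hIT.1; have := hJT.2; omega) hI.1
    · by_contra! h
      refine hI.2.2 _ (by have := hIT.1; have := hJT.2; omega) h (hJ.2.1.resolve_right ?_)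
      have := I.val.2.isLt
      omega
  obtain ⟨hb, he⟩ := hle hI hJ hIT hJT
  obtain ⟨hb', he'⟩ := hle hJ hI hJT hIT
  exact TInterval.ext (le_antisymm hb hb') (le_antisymm he he')

end CPInterval

theorem exists_cpInterval_contains (𝒯 : TempEl N K) {T : ℕ} (hT : T < N) :
    ∃ I, CPInterval 𝒯 I ∧ Contains I T := by
  have hend : ∃ e, T < e ∧ (Changepoint 𝒯 e ∨ e = N) := ⟨N, hT, Or.inr rfl⟩
  set b := Nat.findGreatest (Changepoint 𝒯) T
  set e := Nat.find hend
  have hbT : b ≤ T := Nat.findGreatest_le T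
  obtain ⟨hTe, he⟩ := Nat.find_spec hend
  have heN : e ≤ N := Nat.find_min' hend ⟨hT, Or.inr rfl⟩
  obtain ⟨I, hIb, hIe⟩ := exists_tInterval (N := N) (b := b) (e := e) (by omega) heN
  refine ⟨I, ?_, ?_⟩
  · rw [CPInterval, hIb, hIe]
    refine ⟨Nat.findGreatest_spec (Nat.zero_le T) (Or.inl rfl), he, fun t hbt hte hcp => ?_⟩
    rcases le_or_gt t T with htT | hTt
    · exact Nat.findGreatest_is_greatest hbt htT hcp
    · exact Nat.find_min hend hte ⟨hTt, Or.inl hcp⟩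
  · rw [Contains, hIb, hIe]
    exact ⟨hbT, hTe⟩

theorem slice_coal (𝒯 : TempEl N K) (T : ℕ) : slice (coal 𝒯) T = slice 𝒯 T := by
  rcases lt_or_ge T N with hT | hT
  · obtain ⟨I, hI, hIT⟩ := exists_cpInterval_contains 𝒯 hT
    calc slice (coal 𝒯) T = coal 𝒯 I := by
          refine Finset.sum_eq_single_of_mem I (by simpa using hIT) fun J hJT hJI => ?_
          refine if_neg fun hJ => hJI (hJ.eq_of_contains hI ?_ hIT)
          simpa using hJT
      _ = slice 𝒯 T := by rw [coal, if_pos hI, hI.slice_eq hIT]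
  · rw [slice_eq_zero_of_le _ hT, slice_eq_zero_of_le _ hT]

theorem coal_congr {𝒯 𝒯' : TempEl N K} (h : ∀ T, slice 𝒯 T = slice 𝒯' T) :
    coal 𝒯 = coal 𝒯' := by
  have hslice : slice 𝒯 = slice 𝒯' := funext h
  unfold coal CPInterval Changepoint
  rw [hslice]

end TemporalK

theorem coal_push_pmul_general {N : ℕ} {K : Type*} [CommSemiring K]
    (k k' : TempEl N K) :
    coal (pmul k k') = coal (pmul (coal k) k') :=
  coal_congr fun T => by rw [slice_pmul, slice_pmul, slice_coal]

theorem coal_push_pmul {N : ℕ} (hN : 1 ≤ N) {K : Type*} [CommSemiring K]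
    (k k' : TempEl N K) :
    coal (pmul k k') = coal (pmul (coal k) k') :=
  coal_push_pmul_general k k'
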